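/- For any PP expression e and any pair of variables ?x, ?y, the PP patterns ⟨?x, (e)*, ?y⟩ and ⟨?y, (^e)*, ?x⟩ are semantically equivalent under context-based semantics: their evaluations over any Web of Linked Data W are equal as multisets of solution mappings. -/

import Mathlib

/-- SPARQL property path expressions. -/
inductive PPE : Type where
  | iri : String → PPE
  | neg : List String → PPE
  | inv : PPE → PPE
  | seq : PPE → PPE → PPE
  | alt : PPE → PPE → PPE
  | star : PPE → PPE

/-- Subject/object terms of a property path pattern: IRIs, literals, or variables. -/
inductive Trm : Type where
  | iri : String → Trm
  | lit : String → Trm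
  | var : ℕ → Trm

/-- Graph patterns: property path patterns closed under AND, UNION, OPT. -/
inductive GP : Type where
  | pp : Trm → PPE → Trm → GP
  | and : GP → GP → GP
  | union : GP → GP → GP
  | opt : GP → GP → GP

def Trm.vars : Trm → Set ℕ
  | .var v => {v}
  | _ => ∅

def GP.vars : GP → Set ℕ
  | .pp a _ b => a.vars ∪ b.vars
  | .and P Q => P.vars ∪ Q.vars
  | .union P Q => P.vars ∪ Q.vars
  | .opt P Q => P.vars ∪ Q.vars

def PPE.size : PPE → ℕ
  | .iri _ => 1
  | .neg _ => 1
  | .inv e => 1 + e.size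
  | .seq e f => 1 + e.size + f.size
  | .alt e f => 1 + e.size + f.size
  | .star e => 2 + e.size

def GP.size : GP → ℕ
  | .pp _ e _ => 3 * e.size
  | .and P Q => 1 + P.size + Q.size
  | .union P Q => 1 + P.size + Q.size
  | .opt P Q => 1 + P.size + Q.size

/-- RDF terms: IRIs, blank nodes, literals. -/
inductive RT : Type where
  | iri : String → RT
  | bnode : ℕ → RT
  | lit : String → RT
deriving DecidableEq

/-- RDF triples (subject, predicate IRI, object). -/
abbrev Triple := RT × String × RT

/-- A solution mapping: a partial function from variables to RDF terms. -/
def SolMap := ℕ → Option RT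

/-- The domain of a solution mapping. -/
def domOf (μ : SolMap) : Set ℕ := {v | μ v ≠ none}

/-- Compatibility of solution mappings. -/
def Compat (μ1 μ2 : SolMap) : Prop :=
  ∀ v a b, μ1 v = some a → μ2 v = some b → a = b

/-- Union of solution mappings. -/
def munion (μ1 μ2 : SolMap) : SolMap :=
  fun v => (μ1 v).orElse (fun _ => μ2 v)

/-- The empty solution mapping. -/
def emptyMap : SolMap := fun _ => none

/-- A (finite) Web of Linked Data `W = ⟨D, data, adoc⟩`: a finite set of documents,
each with a finite set of RDF triples, and a partial map from IRIs to documents. -/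
structure WoLD where
  D : Type
  fin : Finite D
  data : D → Finset Triple
  adoc : String → Option D

/-- The context selector `C_W`: an IRI `u` retrieving a document is mapped to the
triples of that document having subject `u`; everything else is mapped to `∅`. -/
def Cw (W : WoLD) : RT → Set Triple
  | .iri u =>
      match W.adoc u with
      | some d => {t | t ∈ W.data d ∧ t.1 = RT.iri u}
      | none => ∅
  | _ => ∅

/-- All RDF terms appearing in some document of `W`. -/
def termsOf (W : WoLD) : Set RT :=
  {t | ∃ d : W.D, ∃ tr ∈ W.data d, t = tr.1 ∨ t = RT.iri tr.2.1 ∨ t = tr.2.2}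

/-- Applying a solution mapping to a subject/object term of a pattern. -/
def appT (μ : SolMap) : Trm → Option RT
  | .iri u => some (.iri u)
  | .lit l => some (.lit l)
  | .var v => μ v

attribute [local instance] Classical.propDecidable

/-- Multiset union of multisets of solution mappings (represented by their
cardinality functions): cardinalities add. -/
noncomputable def unionC (M1 M2 : SolMap → ℕ∞) : SolMap → ℕ∞ :=
  fun μ => M1 μ + M2 μ

/-- The join of two multisets of solution mappings. -/
noncomputable def joinC (M1 M2 : SolMap → ℕ∞) : SolMap → ℕ∞ :=
  fun μ => ∑' p : SolMap × SolMap,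
    if Compat p.1 p.2 ∧ munion p.1 p.2 = μ then M1 p.1 * M2 p.2 else 0

/-- Multiset difference `M1 ∖ M2`: the mappings of `M1` that are incompatible with
every mapping of `M2`, with unchanged cardinalities. -/
noncomputable def diffC (M1 M2 : SolMap → ℕ∞) : SolMap → ℕ∞ :=
  fun μ => if ∀ μ2, M2 μ2 ≠ 0 → ¬ Compat μ μ2 then M1 μ else 0

/-- Restriction of a solution mapping to a set of variables. -/
noncomputable def restrictMap (μ : SolMap) (V : Set ℕ) : SolMap :=
  fun v => if v ∈ V then μ v else none

/-- Projection `π_V` of a multiset of solution mappings. -/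
noncomputable def projC (V : Set ℕ) (M : SolMap → ℕ∞) : SolMap → ℕ∞ :=
  fun μ => ∑' μ' : SolMap, if restrictMap μ' V = μ then M μ' else 0

def Trm.varBound : Trm → ℕ
  | .var v => v + 1
  | _ => 0

/-- A variable not occurring in `a` or `b`. -/
def freshVar (a b : Trm) : ℕ := max a.varBound b.varBound

/-- Context-based semantics `[[·]]_W^ctx` of graph patterns over a Web of Linked Data
(Definition 3 of Hartig & Pirrò), as a multiset of solution mappings represented by its
cardinality function. The auxiliary reachability functions ALPW1/ALPW2 are rendered by
the reflexive-transitive closure of the one-step relation given by evaluating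
`⟨?x, e, ?y⟩`; the star case `⟨?x,(e)*,c⟩` with constant object is reduced (inlined) to
`⟨c,(^e)*,?x⟩`. -/
noncomputable def evalCB (W : WoLD) : GP → SolMap → ℕ∞
  | .pp a (.iri p) b => fun μ =>
      if domOf μ = a.vars ∪ b.vars ∧
         ∃ s o, appT μ a = some s ∧ appT μ b = some o ∧ (s, p, o) ∈ Cw W s
      then 1 else 0
  | .pp a (.neg L) b => fun μ =>
      if domOf μ = a.vars ∪ b.vars ∧
         ∃ s o p, p ∉ L ∧ appT μ a = some s ∧ appT μ b = some o ∧ (s, p, o) ∈ Cw W s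
      then 1 else 0
  | .pp a (.inv e) b => evalCB W (.pp b e a)
  | .pp a (.alt e f) b =>
      unionC (evalCB W (.pp a e b)) (evalCB W (.pp a f b))
  | .pp a (.seq e f) b =>
      projC (a.vars ∪ b.vars)
        (joinC (evalCB W (.pp a e (.var (freshVar a b))))
               (evalCB W (.pp (.var (freshVar a b)) f b)))
  | .pp (.var x) (.star e) (.var y) => fun μ =>
      if domOf μ = {x, y} ∧
         ∃ s t, μ x = some s ∧ μ y = some t ∧ s ∈ termsOf W ∧
           Relation.ReflTransGen
             (fun c c' => ∃ ν : SolMap,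
               evalCB W (.pp (.var 0) e (.var 1)) ν ≠ 0 ∧ ν 0 = some c ∧ ν 1 = some c')
             s t
      then 1 else 0
  | .pp (.var x) (.star e) b => fun μ =>
      -- b is a constant: `⟨?x,(e)*,c⟩` is evaluated as `⟨c,(^e)*,?x⟩`
      if domOf μ = {x} ∧
         ∃ s t, appT μ b = some s ∧ μ x = some t ∧
           Relation.ReflTransGen
             (fun c c' => ∃ ν : SolMap,
               evalCB W (.pp (.var 0) (.inv e) (.var 1)) ν ≠ 0 ∧ ν 0 = some c ∧ ν 1 = some c')
             s t
      then 1 else 0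
  | .pp a (.star e) (.var y) => fun μ =>
      -- a is a constant
      if domOf μ = {y} ∧
         ∃ s t, appT μ a = some s ∧ μ y = some t ∧
           Relation.ReflTransGen
             (fun c c' => ∃ ν : SolMap,
               evalCB W (.pp (.var 0) e (.var 1)) ν ≠ 0 ∧ ν 0 = some c ∧ ν 1 = some c')
             s t
      then 1 else 0
  | .pp a (.star e) b => fun μ =>
      -- a and b are constants
      if domOf μ = (∅ : Set ℕ) ∧
         ∃ s t, appT μ a = some s ∧ appT μ b = some t ∧
           Relation.ReflTransGen
             (fun c c' => ∃ ν : SolMap,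
               evalCB W (.pp (.var 0) e (.var 1)) ν ≠ 0 ∧ ν 0 = some c ∧ ν 1 = some c')
             s t
      then 1 else 0
  | .and P Q => joinC (evalCB W P) (evalCB W Q)
  | .union P Q => unionC (evalCB W P) (evalCB W Q)
  | .opt P Q =>
      unionC (joinC (evalCB W P) (evalCB W Q)) (diffC (evalCB W P) (evalCB W Q))
termination_by P => P.size
decreasing_by all_goals simp only [GP.size, PPE.size]; omega

/-! Evaluating `⟨?x, e, ?y⟩` with `?x ≠ ?y` yields exactly the mappings `?x ↦ s, ?y ↦ o` for
which `s` and `o` are related by the relational reading `e.pathRel W` of `e`; this is a structural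
induction on `e`, where for `e₁/e₂` the fresh middle variable is projected away. Under this reading
`^e` is the converse of `e`, so the reachability relation of `^e` is the converse of that of `e`.
Since every related pair consists of terms of `W`, the side condition `μ(?x) ∈ terms(W)` moves
from one end of a path to the other. -/

protected theorem ENat.summable {ι : Type*} (f : ι → ℕ∞) : Summable f :=
  ⟨_, hasSum_of_isLUB _ (isLUB_iSup (f := fun s : Finset ι => ∑ i ∈ s, f i))⟩

theorem ENat.tsum_ne_zero_iff {ι : Type*} {f : ι → ℕ∞} : ∑' i, f i ≠ 0 ↔ ∃ i, f i ≠ 0 :=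
  (ENat.summable f).tsum_ne_zero_iff

theorem Relation.ReflTransGen.mem_iff {α : Type*} {r : α → α → Prop} {S : Set α} {a b : α}
    (hr : ∀ ⦃c d⦄, r c d → c ∈ S ∧ d ∈ S) (h : ReflTransGen r a b) : a ∈ S ↔ b ∈ S := by
  rcases reflTransGen_iff_eq_or_transGen.mp h with rfl | h
  · rfl
  · obtain ⟨_, hfirst, -⟩ := TransGen.head'_iff.mp h
    obtain ⟨_, -, hlast⟩ := TransGen.tail'_iff.mp h
    exact iff_of_true (hr hfirst).1 (hr hlast).2

def PPE.pathRel (W : WoLD) : PPE → RT → RT → Prop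
  | .iri p => fun s o => (s, p, o) ∈ Cw W s
  | .neg L => fun s o => ∃ p, p ∉ L ∧ (s, p, o) ∈ Cw W s
  | .inv e => fun s o => e.pathRel W o s
  | .seq e f => fun s o => ∃ m, e.pathRel W s m ∧ f.pathRel W m o
  | .alt e f => fun s o => e.pathRel W s o ∨ f.pathRel W s o
  | .star e => fun s o => s ∈ termsOf W ∧ Relation.ReflTransGen (e.pathRel W) s o

theorem mem_termsOf_of_mem_Cw {W : WoLD} {s o : RT} {p : String} (h : (s, p, o) ∈ Cw W s) :
    s ∈ termsOf W ∧ o ∈ termsOf W := by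
  match s, h with
  | .iri u, h =>
    simp only [Cw] at h
    split at h
    next d _ => exact ⟨⟨d, _, h.1, Or.inl rfl⟩, ⟨d, _, h.1, Or.inr (Or.inr rfl)⟩⟩
    next => exact h.elim

theorem PPE.mem_termsOf_of_pathRel {W : WoLD} :
    ∀ {e : PPE} {s o : RT}, e.pathRel W s o → s ∈ termsOf W ∧ o ∈ termsOf W
  | .iri _, _, _, h => mem_termsOf_of_mem_Cw h
  | .neg _, _, _, ⟨_, _, h⟩ => mem_termsOf_of_mem_Cw h
  | .inv e, _, _, h => (mem_termsOf_of_pathRel (e := e) h).symm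
  | .seq _ _, _, _, ⟨_, h₁, h₂⟩ => ⟨(mem_termsOf_of_pathRel h₁).1, (mem_termsOf_of_pathRel h₂).2⟩
  | .alt _ _, _, _, .inl h => mem_termsOf_of_pathRel h
  | .alt _ _, _, _, .inr h => mem_termsOf_of_pathRel h
  | .star _, _, _, ⟨hs, h⟩ => ⟨hs, (h.mem_iff fun _ _ => mem_termsOf_of_pathRel).1 hs⟩

theorem PPE.pathRel_star_inv_iff {W : WoLD} {e : PPE} {s t : RT} :
    e.inv.star.pathRel W t s ↔ e.star.pathRel W s t := by
  change t ∈ termsOf W ∧ Relation.ReflTransGen (Function.swap (e.pathRel W)) t s ↔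
    s ∈ termsOf W ∧ Relation.ReflTransGen (e.pathRel W) s t
  rw [Relation.reflTransGen_swap]
  exact and_congr_left fun h => (h.mem_iff fun _ _ => mem_termsOf_of_pathRel).symm

def pairMap (x y : ℕ) (s o : RT) : SolMap :=
  fun v => if v = x then some s else if v = y then some o else none

section pairMap

variable {x y z : ℕ}

@[simp]
theorem pairMap_apply_left (s o : RT) : pairMap x y s o x = some s := by
  simp [pairMap]

@[simp]
theorem pairMap_apply_right (hxy : x ≠ y) (s o : RT) : pairMap x y s o y = some o := by
  simp [pairMap, hxy.symm]

theorem pairMap_comm (hxy : x ≠ y) (s o : RT) : pairMap y x s o = pairMap x y o s := by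
  funext v
  simp only [pairMap]
  split_ifs <;> simp_all

theorem domOf_eq_pair_and_exists_iff (hxy : x ≠ y) (P : RT → RT → Prop) (ν : SolMap) :
    (domOf ν = {x, y} ∧ ∃ s o, ν x = some s ∧ ν y = some o ∧ P s o) ↔
      ∃ s o, ν = pairMap x y s o ∧ P s o := by
  constructor
  · rintro ⟨hdom, s, o, hx, hy, hso⟩
    refine ⟨s, o, funext fun v => ?_, hso⟩
    have hv : ν v ≠ none ↔ v = x ∨ v = y := Set.ext_iff.mp hdom v
    simp only [pairMap]
    split_ifs <;> simp_all
  · rintro ⟨s, o, rfl, hso⟩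
    refine ⟨Set.ext fun v => ?_, s, o, pairMap_apply_left s o, pairMap_apply_right hxy s o, hso⟩
    simp only [domOf, pairMap, Set.mem_ofPred_eq, Set.mem_insert_iff, Set.mem_singleton_iff]
    split_ifs <;> simp_all

theorem restrictMap_munion_pairMap (hyz : y ≠ z) (s m o : RT) :
    restrictMap (munion (pairMap x z s m) (pairMap z y m o)) {x, y} = pairMap x y s o := by
  funext v
  simp only [restrictMap, munion, pairMap, Set.mem_insert_iff, Set.mem_singleton_iff]
  split_ifs <;> simp_all

theorem compat_pairMap (hxz : x ≠ z) (hxy : x ≠ y) (s m o : RT) :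
    Compat (pairMap x z s m) (pairMap z y m o) := by
  intro v a b ha hb
  simp only [pairMap] at ha hb
  split_ifs at ha hb <;> simp_all

end pairMap

def PPE.EvalMatchesPathRel (W : WoLD) (e : PPE) : Prop :=
  ∀ ⦃x y : ℕ⦄, x ≠ y → ∀ ν : SolMap,
    evalCB W (.pp (.var x) e (.var y)) ν ≠ 0 ↔ ∃ s o, ν = pairMap x y s o ∧ e.pathRel W s o

namespace PPE.EvalMatchesPathRel

variable {W : WoLD} {e f : PPE}

/-- The left-hand side is the relation iterated in the `(e)*` clauses of `evalCB`. -/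
theorem step_eq (he : e.EvalMatchesPathRel W) :
    (fun c c' => ∃ ν : SolMap,
      evalCB W (.pp (.var 0) e (.var 1)) ν ≠ 0 ∧ ν 0 = some c ∧ ν 1 = some c') = e.pathRel W := by
  funext c c'
  simp only [he zero_ne_one]
  apply propext
  constructor
  · rintro ⟨_, ⟨s, o, rfl, hso⟩, hs, ho⟩
    simp_all
  · exact fun h => ⟨_, ⟨c, c', rfl, h⟩, pairMap_apply_left c c', pairMap_apply_right zero_ne_one c c'⟩

theorem iri (W : WoLD) (p : String) : (PPE.iri p).EvalMatchesPathRel W := by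
  intro x y hxy ν
  rw [evalCB, ite_ne_right_iff, and_iff_left one_ne_zero]
  simp only [appT, Trm.vars, Set.singleton_union]
  exact domOf_eq_pair_and_exists_iff hxy _ ν

theorem neg (W : WoLD) (L : List String) : (PPE.neg L).EvalMatchesPathRel W := by
  intro x y hxy ν
  rw [evalCB, ite_ne_right_iff, and_iff_left one_ne_zero]
  simp only [appT, Trm.vars, Set.singleton_union]
  rw [← domOf_eq_pair_and_exists_iff hxy]
  simp only [pathRel, exists_and_left, and_left_comm (a := _ ∉ L)]

theorem inv (he : e.EvalMatchesPathRel W) : e.inv.EvalMatchesPathRel W := by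
  intro x y hxy ν
  rw [evalCB, he hxy.symm]
  simp only [pairMap_comm hxy]
  exact exists_comm

theorem seq (he : e.EvalMatchesPathRel W) (hf : f.EvalMatchesPathRel W) :
    (e.seq f).EvalMatchesPathRel W := by
  intro x y hxy ν
  rw [evalCB]
  set z := freshVar (.var x) (.var y)
  have hxz : x ≠ z := by simp only [z, freshVar, Trm.varBound]; omega
  have hyz : y ≠ z := by simp only [z, freshVar, Trm.varBound]; omega
  simp only [projC, joinC, ENat.tsum_ne_zero_iff, ite_ne_right_iff]
  simp only [mul_ne_zero_iff, he hxz, hf hyz.symm, Trm.vars, Set.singleton_union]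
  constructor
  · rintro ⟨_, rfl, ⟨_, _⟩, ⟨hcompat, rfl⟩, ⟨s, m, rfl, hsm⟩, ⟨m', o, rfl, hmo⟩⟩
    obtain rfl : m = m' := hcompat z m m' (pairMap_apply_right hxz s m) (pairMap_apply_left m' o)
    exact ⟨s, o, restrictMap_munion_pairMap hyz s m o, m, hsm, hmo⟩
  · rintro ⟨s, o, rfl, m, hsm, hmo⟩
    exact ⟨_, restrictMap_munion_pairMap hyz s m o, (_, _), ⟨compat_pairMap hxz hxy s m o, rfl⟩,
      ⟨s, m, rfl, hsm⟩, ⟨m, o, rfl, hmo⟩⟩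

theorem alt (he : e.EvalMatchesPathRel W) (hf : f.EvalMatchesPathRel W) :
    (e.alt f).EvalMatchesPathRel W := by
  intro x y hxy ν
  rw [evalCB, unionC, ne_eq, add_eq_zero, not_and_or, ← ne_eq, ← ne_eq, he hxy, hf hxy]
  simp only [pathRel, and_or_left, exists_or]

theorem star (he : e.EvalMatchesPathRel W) : e.star.EvalMatchesPathRel W := by
  intro x y hxy ν
  rw [evalCB, he.step_eq]
  beta_reduce
  rw [ite_ne_right_iff, and_iff_left one_ne_zero]
  exact domOf_eq_pair_and_exists_iff hxy _ ν

end PPE.EvalMatchesPathRel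

theorem PPE.evalMatchesPathRel (W : WoLD) : ∀ e : PPE, e.EvalMatchesPathRel W
  | .iri p => .iri W p
  | .neg L => .neg W L
  | .inv e => (evalMatchesPathRel W e).inv
  | .seq e f => (evalMatchesPathRel W e).seq (evalMatchesPathRel W f)
  | .alt e f => (evalMatchesPathRel W e).alt (evalMatchesPathRel W f)
  | .star e => (evalMatchesPathRel W e).star

/-- The PP patterns `⟨?x, (e)*, ?y⟩` and `⟨?y, (^e)*, ?x⟩` are semantically equivalent
under context-based semantics over any Web of Linked Data. -/
theorem star_inv_swap (e : PPE) (x y : ℕ) (W : WoLD) :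
    evalCB W (.pp (.var x) (.star e) (.var y)) =
      evalCB W (.pp (.var y) (.star (.inv e)) (.var x)) := by
  funext μ
  rw [evalCB, evalCB, (PPE.evalMatchesPathRel W e).step_eq,
    (PPE.evalMatchesPathRel W e.inv).step_eq, Set.pair_comm]
  refine if_congr (and_congr_right fun _ => ⟨?_, ?_⟩) rfl rfl
  · rintro ⟨s, t, hx, hy, h⟩
    exact ⟨t, s, hy, hx, PPE.pathRel_star_inv_iff.2 h⟩
  · rintro ⟨t, s, hy, hx, h⟩
    exact ⟨s, t, hx, hy, PPE.pathRel_star_inv_iff.1 h⟩
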